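/- arXiv:0911.3722 — 11 statements merged into one kernel-verified Lean document; each statement's English description precedes it below -/
import Mathlib

section
/- For a subset A of a group G the following are equivalent: (1) A is small; (2) for every finite set F ⊆ G the complement G \ FA is large. -/
open scoped Pointwise

/-- A subset `A` of a group `G` is *large* if `F * A = G` for some finite `F ⊆ G`. -/
def IsLarge {G : Type*} [Group G] (A : Set G) : Prop :=
  ∃ F : Finset G, (F : Set G) * A = Set.univ

/-- A subset `A` of a group `G` is *small* if `B \ A` is large for every large `B ⊆ G`. -/
def IsSmallSet {G : Type*} [Group G] (A : Set G) : Prop :=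
  ∀ B : Set G, IsLarge B → IsLarge (B \ A)

lemma singleton_mul_eq_smul {G : Type*} [Group G] (g : G) (B : Set G) :
    ({g} : Set G) * B = g • B := by
  rw [← smul_eq_mul, Set.singleton_smul]

lemma isLarge_smul {G : Type*} [Group G] {B : Set G} (hB : IsLarge B) (g : G) :
    IsLarge (g • B) := by
  classical
  obtain ⟨E, hE⟩ := hB
  refine ⟨E * {g⁻¹}, ?_⟩
  rw [Finset.coe_mul, Finset.coe_singleton, mul_assoc, singleton_mul_eq_smul,
    inv_smul_smul, hE]

lemma isSmallSet_smul {G : Type*} [Group G] {A : Set G} (hA : IsSmallSet A) (g : G) :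
    IsSmallSet (g • A) := by
  classical
  intro B hB
  obtain ⟨E, hE⟩ := hA (g⁻¹ • B) (isLarge_smul hB g⁻¹)
  refine ⟨E * {g⁻¹}, ?_⟩
  rw [Finset.coe_mul, Finset.coe_singleton, mul_assoc, singleton_mul_eq_smul,
    Set.smul_set_sdiff, inv_smul_smul, hE]

lemma isSmallSet_union {G : Type*} [Group G] {A A' : Set G}
    (hA : IsSmallSet A) (hA' : IsSmallSet A') : IsSmallSet (A ∪ A') := by
  intro B hB
  have := hA' _ (hA B hB)
  rwa [Set.diff_diff] at this

/-- For a subset `A` of a group `G` the following are equivalent: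
(1) `A` is small; (2) for every finite `F ⊆ G` the complement `G \ FA` is large. -/
theorem small_iff_compl_of_finset_mul_large {G : Type*} [Group G] (A : Set G) :
    IsSmallSet A ↔ ∀ F : Finset G, IsLarge ((Set.univ : Set G) \ ((F : Set G) * A)) := by
  constructor
  · classical
    intro hA F
    have hsmall : IsSmallSet ((F : Set G) * A) := by
      induction F using Finset.induction_on with
      | empty =>
        intro B hB
        simpa using hB
      | @insert a F hx ih =>
        rw [Finset.coe_insert, Set.insert_eq, Set.union_mul, singleton_mul_eq_smul]
        exact isSmallSet_union (isSmallSet_smul hA a) ih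
    have huniv : IsLarge (Set.univ : Set G) := ⟨{1}, by simp⟩
    exact hsmall _ huniv
  · classical
    intro h B hB
    obtain ⟨F, hF⟩ := hB
    obtain ⟨E, hE⟩ := h F
    refine ⟨E * F, ?_⟩
    apply Set.eq_univ_of_univ_subset
    calc (Set.univ : Set G) = (E : Set G) * (Set.univ \ ((F : Set G) * A)) := hE.symm
      _ ⊆ (E : Set G) * ((F : Set G) * (B \ A)) := by
          apply Set.mul_subset_mul_left
          intro x hx
          obtain ⟨hx1, hx2⟩ := hx
          have hxF : x ∈ (F : Set G) * B := by rw [hF]; trivial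
          obtain ⟨f, hf, b, hb, rfl⟩ := hxF
          refine ⟨f, hf, b, ⟨hb, fun hbA => hx2 ⟨f, hf, b, hbA, rfl⟩⟩, rfl⟩
      _ = ((E * F : Finset G) : Set G) * (B \ A) := by
          rw [Finset.coe_mul, mul_assoc]
end

section
/- Let A be a subset of a group G such that for every finite set F ⊆ G the complement G \ FA is large. Then there exists a left-invariant totally bounded topology on G with respect to which A is nowhere dense (in fact the family τ = {∅} ∪ {U ⊆ G : U ⊇ G \ FA for some finite F ⊆ G} is such a topology, A is closed in it, and A has empty interior). -/
open scoped Pointwise Topology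

/-- A topology on a group `G` is *left-invariant* if every left translation
`x ↦ g * x` is a homeomorphism. -/
def IsLeftInvariantTop {G : Type*} [Group G] (t : TopologicalSpace G) : Prop :=
  ∀ g : G, @IsHomeomorph G G t t (fun x => g * x)

/-- A topology on a group `G` is *totally bounded* if every nonempty open set is large. -/
def IsTotallyBoundedTop {G : Type*} [Group G] (t : TopologicalSpace G) : Prop :=
  ∀ U : Set G, IsOpen[t] U → U.Nonempty → IsLarge U

namespace Filter

variable {X : Type*}

abbrev emptyOrMemTopology (f : Filter X) : TopologicalSpace X where
  IsOpen U := U = ∅ ∨ U ∈ f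
  isOpen_univ := .inr univ_mem
  isOpen_inter := by
    rintro U V (rfl | hU) (rfl | hV)
    exacts [.inl (Set.empty_inter _), .inl (Set.empty_inter _), .inl (Set.inter_empty _),
      .inr (inter_mem hU hV)]
  isOpen_sUnion S hS := by
    rcases (⋃₀ S).eq_empty_or_nonempty with hempty | ⟨x, U, hUS, hxU⟩
    · exact .inl hempty
    · rcases hS U hUS with rfl | hU
      · exact absurd hxU (Set.notMem_empty x)
      · exact .inr (mem_of_superset hU (Set.subset_sUnion_of_mem hUS))

variable {f : Filter X} {s : Set X}

theorem isOpen_emptyOrMemTopology {U : Set X} :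
    IsOpen[f.emptyOrMemTopology] U ↔ U = ∅ ∨ U ∈ f :=
  .rfl

theorem isClosed_emptyOrMemTopology_of_compl_mem (hs : sᶜ ∈ f) :
    IsClosed[f.emptyOrMemTopology] s :=
  let := f.emptyOrMemTopology
  ⟨.inr hs⟩

theorem interior_emptyOrMemTopology_eq_empty_of_compl_mem [f.NeBot] (hs : sᶜ ∈ f) :
    @interior X f.emptyOrMemTopology s = ∅ := by
  let := f.emptyOrMemTopology
  refine (isOpen_interior (s := s)).resolve_right fun hint => ?_
  have hs' : s ∈ f := mem_of_superset hint interior_subset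
  exact empty_notMem f (by simpa using inter_mem hs' hs)

end Filter

section

variable {G : Type*} [Group G]

theorem IsLarge.mono {U V : Set G} (hU : IsLarge U) (hUV : U ⊆ V) : IsLarge V :=
  let ⟨F, hF⟩ := hU
  ⟨F, Set.eq_univ_of_univ_subset (hF ▸ Set.mul_subset_mul_left hUV)⟩

theorem IsLarge.nonempty {U : Set G} (hU : IsLarge U) : U.Nonempty := by
  obtain ⟨F, hF⟩ := hU
  by_contra hempty
  rw [Set.not_nonempty_iff_eq_empty.1 hempty, Set.mul_empty] at hF
  exact Set.empty_ne_univ hF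

theorem isLeftInvariantTop_of_isOpen_smul {t : TopologicalSpace G}
    (h : ∀ (g : G) (U : Set G), IsOpen[t] U → IsOpen[t] (g • U)) :
    IsLeftInvariantTop t := fun g =>
  have hcont : ∀ g : G, Continuous[t, t] (g * ·) := fun g =>
    continuous_def.2 fun U hU => by
      rw [show (g * ·) ⁻¹' U = g⁻¹ • U from Set.preimage_smul g U]
      exact h g⁻¹ U hU
  ({ Equiv.mulLeft g with continuous_toFun := hcont g, continuous_invFun := hcont g⁻¹ } :
    @Homeomorph G G t t).isHomeomorph

theorem Filter.isLeftInvariantTop_emptyOrMemTopology {f : Filter G}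
    (hf : ∀ (g : G) {U : Set G}, U ∈ f → g • U ∈ f) :
    IsLeftInvariantTop f.emptyOrMemTopology :=
  isLeftInvariantTop_of_isOpen_smul fun g U hU => by
    rcases hU with rfl | hU
    exacts [.inl (Set.smul_set_empty), .inr (hf g hU)]

theorem Filter.isTotallyBoundedTop_emptyOrMemTopology {f : Filter G}
    (hf : ∀ U ∈ f, IsLarge U) : IsTotallyBoundedTop f.emptyOrMemTopology := by
  rintro U (rfl | hU) hne
  exacts [absurd hne Set.not_nonempty_empty, hf U hU]

open Filter

/-- The filter of sets whose complement is covered by finitely many left translates of `A`. -/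
def coFiniteTranslates (A : Set G) : Filter G :=
  comk (fun s => ∃ F : Finset G, s ⊆ F * A) ⟨∅, Set.empty_subset _⟩
    (fun _ ⟨F, hF⟩ _ hst => ⟨F, hst.trans hF⟩)
    (fun _ ⟨F₁, h₁⟩ _ ⟨F₂, h₂⟩ => by
      classical
      exact ⟨F₁ ∪ F₂, by rw [Finset.coe_union, Set.union_mul]; exact Set.union_subset_union h₁ h₂⟩)

variable {A U : Set G}

theorem mem_coFiniteTranslates : U ∈ coFiniteTranslates A ↔ ∃ F : Finset G, (F * A)ᶜ ⊆ U := by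
  simp only [coFiniteTranslates, mem_comk, Set.compl_subset_comm]

theorem compl_mem_coFiniteTranslates : Aᶜ ∈ coFiniteTranslates A :=
  mem_coFiniteTranslates.2 ⟨{1}, by simp⟩

theorem smul_mem_coFiniteTranslates (g : G) (hU : U ∈ coFiniteTranslates A) :
    g • U ∈ coFiniteTranslates A := by
  classical
  obtain ⟨F, hF⟩ := mem_coFiniteTranslates.1 hU
  refine mem_coFiniteTranslates.2 ⟨g • F, ?_⟩
  rw [Finset.coe_smul_finset, smul_mul_assoc, ← Set.smul_set_compl]
  exact Set.smul_set_mono hF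

theorem coFiniteTranslates_neBot (h : ∀ F : Finset G, ((F : Set G) * A)ᶜ.Nonempty) :
    (coFiniteTranslates A).NeBot :=
  ⟨fun hbot => by
    obtain ⟨F, hF⟩ := mem_coFiniteTranslates.1 (hbot ▸ mem_bot : ∅ ∈ coFiniteTranslates A)
    exact (h F).ne_empty (Set.subset_empty_iff.1 hF)⟩

theorem isLarge_of_mem_coFiniteTranslates (h : ∀ F : Finset G, IsLarge ((F : Set G) * A)ᶜ)
    (hU : U ∈ coFiniteTranslates A) : IsLarge U :=
  let ⟨F, hF⟩ := mem_coFiniteTranslates.1 hU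
  (h F).mono hF

end

/-- If `G \ FA` is large for every finite `F ⊆ G`, then the family
`τ = {∅} ∪ {U ⊆ G : U ⊇ G \ FA for some finite F ⊆ G}` is a left-invariant totally bounded
topology on `G` in which `A` is closed, has empty interior, and is nowhere dense. -/
theorem exists_leftInvariant_totallyBounded_topology_nowhereDense
    {G : Type*} [Group G] (A : Set G)
    (h : ∀ F : Finset G, IsLarge ((Set.univ : Set G) \ ((F : Set G) * A))) :
    ∃ t : TopologicalSpace G,
      (∀ U : Set G, IsOpen[t] U ↔
        (U = ∅ ∨ ∃ F : Finset G, (Set.univ : Set G) \ ((F : Set G) * A) ⊆ U)) ∧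
      IsLeftInvariantTop t ∧ IsTotallyBoundedTop t ∧
      @IsClosed G t A ∧ @interior G t A = ∅ ∧
      @interior G t (@closure G t A) = ∅ := by
  simp only [← Set.compl_eq_univ_sdiff] at h ⊢
  have := coFiniteTranslates_neBot fun F => (h F).nonempty
  let t := (coFiniteTranslates A).emptyOrMemTopology
  have hclosed : IsClosed A :=
    Filter.isClosed_emptyOrMemTopology_of_compl_mem compl_mem_coFiniteTranslates
  have hint : interior A = ∅ :=
    Filter.interior_emptyOrMemTopology_eq_empty_of_compl_mem compl_mem_coFiniteTranslates
  exact ⟨t, fun U => by rw [Filter.isOpen_emptyOrMemTopology, mem_coFiniteTranslates],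
    Filter.isLeftInvariantTop_emptyOrMemTopology fun g => smul_mem_coFiniteTranslates g,
    Filter.isTotallyBoundedTop_emptyOrMemTopology fun _ => isLarge_of_mem_coFiniteTranslates h,
    hclosed, hint, hclosed.isNowhereDense_iff.2 hint⟩
end

section
/- Let A be a subset of a group G that is nowhere dense with respect to some left-invariant totally bounded topology on G. Then for every finite set F ⊆ G the complement G \ FA is large; consequently A is small. -/
open scoped Pointwise Topology

/-!
Left translations are homeomorphisms, so `F * A` is a finite union of nowhere dense sets and
hence nowhere dense; the complement of its closure is a nonempty open set, hence large.
If `E * B = G`, then `G \ E * A ⊆ E * (B \ A)`, so `B \ A` is large as well.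
-/

namespace IsLarge

variable {G : Type*} [Group G] {S T : Set G}

lemma mono_s2 (hST : S ⊆ T) (hS : IsLarge S) : IsLarge T := by
  obtain ⟨F, hF⟩ := hS
  exact ⟨F, Set.eq_univ_of_univ_subset (hF ▸ Set.mul_subset_mul_left hST)⟩

lemma of_finset_mul (E : Finset G) (h : IsLarge ((E : Set G) * S)) : IsLarge S := by
  classical
  obtain ⟨D, hD⟩ := h
  exact ⟨D * E, by rw [Finset.coe_mul, mul_assoc, hD]⟩

end IsLarge

section NowhereDense

variable {X : Type*} [TopologicalSpace X]

lemma IsNowhereDense.union {s t : Set X} (hs : IsNowhereDense s) (ht : IsNowhereDense t) :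
    IsNowhereDense (s ∪ t) := by
  rw [IsNowhereDense, closure_union, interior_union_isClosed_of_interior_empty isClosed_closure ht]
  exact hs

lemma isNowhereDense_biUnion_finset {ι : Type*} (F : Finset ι) {s : ι → Set X}
    (h : ∀ i ∈ F, IsNowhereDense (s i)) : IsNowhereDense (⋃ i ∈ F, s i) := by
  classical
  induction F using Finset.induction with
  | empty => simp
  | insert i F _ ih =>
    rw [Finset.set_biUnion_insert]
    exact (h i (F.mem_insert_self i)).union (ih fun j hj => h j (Finset.mem_insert_of_mem hj))

lemma IsNowhereDense.image_of_isHomeomorph {Y : Type*} [TopologicalSpace Y] {f : X → Y}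
    (hf : IsHomeomorph f) {s : Set X} (hs : IsNowhereDense s) : IsNowhereDense (f '' s) := by
  rw [IsNowhereDense, ← hf.image_closure, ← hf.image_interior, hs, Set.image_empty]

end NowhereDense

section TopologizedGroup

variable {G : Type*} [Group G] [t : TopologicalSpace G] {A : Set G}

lemma IsNowhereDense.finset_mul (ht : IsLeftInvariantTop t) (hA : IsNowhereDense A)
    (F : Finset G) : IsNowhereDense ((F : Set G) * A) := by
  rw [← Set.iUnion_mul_left_image]
  exact isNowhereDense_biUnion_finset F fun g _ => hA.image_of_isHomeomorph (ht g)

lemma IsNowhereDense.isLarge_univ_diff (ht : IsTotallyBoundedTop t) (hA : IsNowhereDense A) :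
    IsLarge (Set.univ \ A) := by
  have hdense : Dense (closure A)ᶜ := interior_eq_empty_iff_dense_compl.mp hA
  refine (ht _ isClosed_closure.isOpen_compl hdense.nonempty).mono_s2 fun x hx => ?_
  exact ⟨Set.mem_univ x, fun hxA => hx (subset_closure hxA)⟩

end TopologizedGroup

lemma univ_diff_finset_mul_subset_finset_mul_diff {G : Type*} [Group G] {A B : Set G}
    {E : Finset G} (hE : (E : Set G) * B = Set.univ) :
    Set.univ \ ((E : Set G) * A) ⊆ (E : Set G) * (B \ A) := by
  rintro z ⟨-, hzA⟩
  obtain ⟨e, he, b, hb, rfl⟩ : z ∈ (E : Set G) * B := hE ▸ Set.mem_univ z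
  exact Set.mul_mem_mul he ⟨hb, fun hbA => hzA (Set.mul_mem_mul he hbA)⟩

/-- If `A` is nowhere dense with respect to some left-invariant totally bounded topology
on `G`, then `G \ FA` is large for every finite `F ⊆ G`; consequently `A` is small. -/
theorem compl_large_and_small_of_nowhereDense {G : Type*} [Group G] (A : Set G)
    (h : ∃ t : TopologicalSpace G, IsLeftInvariantTop t ∧ IsTotallyBoundedTop t ∧
      @interior G t (@closure G t A) = ∅) :
    (∀ F : Finset G, IsLarge ((Set.univ : Set G) \ ((F : Set G) * A))) ∧ IsSmallSet A := by
  obtain ⟨t, hinv, htb, hA⟩ := h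
  have hcompl (F : Finset G) : IsLarge (Set.univ \ ((F : Set G) * A)) :=
    (IsNowhereDense.finset_mul hinv hA F).isLarge_univ_diff htb
  refine ⟨hcompl, fun B ⟨E, hE⟩ => ?_⟩
  exact ((hcompl E).mono_s2 (univ_diff_finset_mul_subset_finset_mul_diff hE)).of_finset_mul E
end

section
/- Let I be an invariant ideal on a group G. A subset A ⊆ G is I-small if and only if for every finite set F ⊆ G the complement G \ FA is I-large. Consequently, every small subset of G is I-small. -/
open scoped Pointwise Topology

/-- A translation-invariant ideal on a group `G`: a proper family of subsets of `G`
containing the empty set, closed under subsets, finite unions and left translations. -/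
structure IsInvariantIdeal (G : Type*) [Group G] (I : Set (Set G)) : Prop where
  proper : I ≠ Set.univ
  empty_mem : ∅ ∈ I
  subset_mem : ∀ ⦃A B : Set G⦄, A ∈ I → B ⊆ A → B ∈ I
  union_mem : ∀ ⦃A B : Set G⦄, A ∈ I → B ∈ I → A ∪ B ∈ I
  translate_mem : ∀ (x : G) ⦃A : Set G⦄, A ∈ I → (fun a => x * a) '' A ∈ I

/-- A subset `A ⊆ G` is `I`-large if `G \ FA ∈ I` for some finite `F ⊆ G`. -/
def IsILarge {G : Type*} [Group G] (I : Set (Set G)) (A : Set G) : Prop :=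
  ∃ F : Finset G, (Set.univ : Set G) \ ((F : Set G) * A) ∈ I

/-- A subset `A ⊆ G` is `I`-small if `L \ A` is `I`-large for every `I`-large `L ⊆ G`. -/
def IsISmall {G : Type*} [Group G] (I : Set (Set G)) (A : Set G) : Prop :=
  ∀ L : Set G, IsILarge I L → IsILarge I (L \ A)


section Helpers

variable {G : Type*} [Group G] {I : Set (Set G)}

lemma ideal_smul (hI : IsInvariantIdeal G I) {A : Set G} (hA : A ∈ I) (x : G) :
    x • A ∈ I := by
  have h := hI.translate_mem x hA
  simpa [← Set.image_smul, smul_eq_mul] using h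

lemma ideal_biUnion (hI : IsInvariantIdeal G I) {α : Type*} (s : Finset α) (f : α → Set G)
    (h : ∀ a ∈ s, f a ∈ I) : (⋃ a ∈ s, f a) ∈ I := by
  classical
  induction s using Finset.induction_on with
  | empty => simpa using hI.empty_mem
  | @insert x s hx ih =>
      rw [Finset.set_biUnion_insert]
      exact hI.union_mem (h _ (Finset.mem_insert_self _ _))
        (ih fun a ha => h a (Finset.mem_insert_of_mem ha))

lemma iLarge_univ (hI : IsInvariantIdeal G I) : IsILarge I (Set.univ : Set G) := by
  refine ⟨{1}, ?_⟩
  have : (↑({1} : Finset G) : Set G) * (Set.univ : Set G) = Set.univ := by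
    simp [Set.singleton_mul]
  rw [this]
  simpa using hI.empty_mem

lemma large_univ : IsLarge (Set.univ : Set G) := by
  refine ⟨{1}, ?_⟩
  simp [Set.singleton_mul]

lemma large_iLarge (hI : IsInvariantIdeal G I) {A : Set G} (hA : IsLarge A) : IsILarge I A := by
  obtain ⟨F, hF⟩ := hA
  exact ⟨F, by rw [hF]; simpa using hI.empty_mem⟩

lemma iLarge_smul {L : Set G} (hL : IsILarge I L) (x : G) : IsILarge I (x • L) := by
  classical
  obtain ⟨F, hF⟩ := hL
  refine ⟨F * {x⁻¹}, ?_⟩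
  have : (↑(F * {x⁻¹}) : Set G) * (x • L) = (↑F : Set G) * L := by
    rw [Finset.coe_mul, Finset.coe_singleton, mul_assoc, Set.singleton_mul]
    show (↑F : Set G) * (x⁻¹ • (x • L)) = (↑F : Set G) * L
    rw [inv_smul_smul]
  rwa [this]

lemma large_smul {L : Set G} (hL : IsLarge L) (x : G) : IsLarge (x • L) := by
  classical
  obtain ⟨F, hF⟩ := hL
  refine ⟨F * {x⁻¹}, ?_⟩
  rw [Finset.coe_mul, Finset.coe_singleton, mul_assoc, Set.singleton_mul]
  show (↑F : Set G) * (x⁻¹ • (x • L)) = Set.univ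
  rw [inv_smul_smul, hF]

lemma iSmall_empty : IsISmall I (∅ : Set G) := fun _ hL => by simpa using hL

lemma iSmall_union {A B : Set G} (hA : IsISmall I A) (hB : IsISmall I B) :
    IsISmall I (A ∪ B) := fun L hL => by
  rw [← Set.diff_diff]; exact hB _ (hA _ hL)

lemma iSmall_smul {A : Set G} (hA : IsISmall I A) (x : G) : IsISmall I (x • A) := by
  intro L hL
  have h1 : IsILarge I (x⁻¹ • L \ A) := hA _ (iLarge_smul hL x⁻¹)
  have h2 := iLarge_smul h1 x
  rwa [Set.smul_set_sdiff, smul_smul, mul_inv_cancel, one_smul] at h2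

lemma iSmall_finset_mul {A : Set G} (hA : IsISmall I A) (F : Finset G) :
    IsISmall I ((F : Set G) * A) := by
  classical
  induction F using Finset.induction_on with
  | empty => simpa using (iSmall_empty : IsISmall I (∅ : Set G))
  | @insert x F hx ih =>
      have : (↑(insert x F) : Set G) * A = x • A ∪ (↑F : Set G) * A := by
        rw [Finset.coe_insert, Set.insert_eq, Set.union_mul, Set.singleton_mul]
        rfl
      rw [this]
      exact iSmall_union (iSmall_smul hA x) ih

lemma smallSet_empty : IsSmallSet (∅ : Set G) := fun _ hL => by simpa using hL

lemma smallSet_union {A B : Set G} (hA : IsSmallSet A) (hB : IsSmallSet B) :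
    IsSmallSet (A ∪ B) := fun L hL => by
  rw [← Set.diff_diff]; exact hB _ (hA _ hL)

lemma smallSet_smul {A : Set G} (hA : IsSmallSet A) (x : G) : IsSmallSet (x • A) := by
  intro L hL
  have h1 : IsLarge (x⁻¹ • L \ A) := hA _ (large_smul hL x⁻¹)
  have h2 := large_smul h1 x
  rwa [Set.smul_set_sdiff, smul_smul, mul_inv_cancel, one_smul] at h2

lemma smallSet_finset_mul {A : Set G} (hA : IsSmallSet A) (F : Finset G) :
    IsSmallSet ((F : Set G) * A) := by
  classical
  induction F using Finset.induction_on with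
  | empty => simpa using (smallSet_empty : IsSmallSet (∅ : Set G))
  | @insert x F hx ih =>
      have : (↑(insert x F) : Set G) * A = x • A ∪ (↑F : Set G) * A := by
        rw [Finset.coe_insert, Set.insert_eq, Set.union_mul, Set.singleton_mul]
        rfl
      rw [this]
      exact smallSet_union (smallSet_smul hA x) ih

lemma key_backward (hI : IsInvariantIdeal G I) {A : Set G}
    (h : ∀ F : Finset G, IsILarge I ((Set.univ : Set G) \ ((F : Set G) * A))) :
    IsISmall I A := by
  classical
  intro L hL
  obtain ⟨F₀, hJ⟩ := hL
  obtain ⟨F₁, hJ₁⟩ := h F₀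
  refine ⟨F₁ * F₀, ?_⟩
  set J : Set G := Set.univ \ ((F₀ : Set G) * L) with hJdef
  set J₁ : Set G := Set.univ \ ((F₁ : Set G) * (Set.univ \ ((F₀ : Set G) * A))) with hJ₁def
  have hsub : Set.univ \ ((↑(F₁ * F₀) : Set G) * (L \ A)) ⊆ (⋃ f ∈ F₁, f • J) ∪ J₁ := by
    intro g hg
    by_cases hg1 : g ∈ J₁
    · exact Or.inr hg1
    by_cases hg2 : g ∈ ⋃ f ∈ F₁, f • J
    · exact Or.inl hg2
    exfalso
    have hmem : g ∈ (F₁ : Set G) * (Set.univ \ ((F₀ : Set G) * A)) := by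
      by_contra hc; exact hg1 ⟨trivial, hc⟩
    obtain ⟨f₁, hf₁, b, hb, rfl⟩ := hmem
    have hbJ : b ∉ J := fun hbJ =>
      hg2 (Set.mem_biUnion (Finset.mem_coe.mp hf₁) ⟨b, hbJ, rfl⟩)
    have hbL : b ∈ (F₀ : Set G) * L := by
      by_contra hc; exact hbJ ⟨trivial, hc⟩
    obtain ⟨f₀, hf₀, l, hl, rfl⟩ := hbL
    have hlA : l ∉ A := fun hlA => hb.2 ⟨f₀, hf₀, l, hlA, rfl⟩
    refine hg.2 ?_
    rw [Finset.coe_mul]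
    exact ⟨f₁ * f₀, Set.mul_mem_mul hf₁ hf₀, l, ⟨hl, hlA⟩, mul_assoc f₁ f₀ l⟩
  refine hI.subset_mem (hI.union_mem ?_ hJ₁) hsub
  exact ideal_biUnion hI F₁ _ fun f _ => ideal_smul hI hJ f

end Helpers

/-- `A` is `I`-small iff `G \ FA` is `I`-large for every finite `F ⊆ G`;
consequently, every small subset of `G` is `I`-small. -/
theorem iSmall_iff_compl_iLarge {G : Type*} [Group G] (I : Set (Set G))
    (hI : IsInvariantIdeal G I) :
    (∀ A : Set G, IsISmall I A ↔
      ∀ F : Finset G, IsILarge I ((Set.univ : Set G) \ ((F : Set G) * A))) ∧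
    (∀ A : Set G, IsSmallSet A → IsISmall I A) := by
  have part1 : ∀ A : Set G, IsISmall I A ↔
      ∀ F : Finset G, IsILarge I ((Set.univ : Set G) \ ((F : Set G) * A)) := by
    intro A
    constructor
    · intro hA F
      exact iSmall_finset_mul hA F Set.univ (iLarge_univ hI)
    · exact key_backward hI
  refine ⟨part1, fun A hA => (part1 A).mpr fun F => large_iLarge hI ?_⟩
  exact smallSet_finset_mul hA F Set.univ large_univ
end

section
/- For any invariant ideal I on a group G with I ⊆ S, the S-completion S_I equals the ideal S of small subsets of G. -/
open scoped Pointwise Topology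

lemma univ_isLarge {G : Type*} [Group G] : IsLarge (Set.univ : Set G) :=
  ⟨{1}, by simp⟩

lemma isLarge_of_compl_small {G : Type*} [Group G] {D : Set G} (hD : IsSmallSet D) :
    IsLarge (Set.univ \ D) := hD _ univ_isLarge

lemma isLarge_of_finset_mul {G : Type*} [Group G] {F : Finset G} {L : Set G}
    (h : IsLarge ((F : Set G) * L)) : IsLarge L := by
  classical
  obtain ⟨F', hF'⟩ := h
  exact ⟨F' * F, by rw [Finset.coe_mul, mul_assoc]; exact hF'⟩

/-- For any invariant ideal `I ⊆ S`, the `S`-completion `S_I` equals the ideal `S`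
of small subsets of `G`. -/
theorem sCompletion_eq_small_of_subset_small {G : Type*} [Group G] (I : Set (Set G))
    (hI : IsInvariantIdeal G I) (hIS : I ⊆ {A : Set G | IsSmallSet A}) :
    {A : Set G | IsISmall I A} = {A : Set G | IsSmallSet A} := by
  ext A
  simp only [Set.mem_setOf_eq]
  constructor
  · intro hA B hB
    obtain ⟨F, hF⟩ := hB
    have hBI : IsILarge I B := ⟨F, by rw [hF]; simpa using hI.empty_mem⟩
    obtain ⟨F', hF'⟩ := hA B hBI
    have hsmall := hIS hF'
    have := isLarge_of_compl_small hsmall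
    rw [Set.diff_diff_cancel_left (Set.subset_univ _)] at this
    exact isLarge_of_finset_mul this
  · intro hA L hL
    obtain ⟨F, hF⟩ := hL
    have hsmall := hIS hF
    have hlarge := isLarge_of_compl_small hsmall
    rw [Set.diff_diff_cancel_left (Set.subset_univ _)] at hlarge
    have hL' : IsLarge L := isLarge_of_finset_mul hlarge
    obtain ⟨F', hF'⟩ := hA _ hL'
    exact ⟨F', by rw [hF']; simpa using hI.empty_mem⟩
end

section
/- For any nonempty family (I_α)_{α ∈ A} of S-complete invariant ideals on a group G, the intersection I = ⋂_{α ∈ A} I_α is an S-complete invariant ideal on G. -/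
open scoped Pointwise Topology

/-
A set of the intersection ideal `J = ⋂ i, I i` is `J`-small because members of any invariant
ideal are small: `I`-largeness survives removing a set of `I`. Conversely, a `J`-small set `A`
is `I i`-small: if `G \ F L ∈ I i`, then `L ∪ (G \ F L)` is large outright, hence `J`-large, so
removing `A` keeps it `J`-large and thus `I i`-large; discarding the `I i`-set `G \ F L` again
shows that `L \ A` is `I i`-large. `S`-completeness of each `I i` then gives `A ∈ I i`.
-/

section

variable {G : Type*} [Group G]

namespace IsInvariantIdeal

theorem iInter {ι : Type*} [Nonempty ι] {I : ι → Set (Set G)}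
    (hI : ∀ i, IsInvariantIdeal G (I i)) : IsInvariantIdeal G (⋂ i, I i) where
  proper h := by
    obtain ⟨i⟩ := ‹Nonempty ι›
    exact (hI i).proper (Set.eq_univ_of_univ_subset (h ▸ Set.iInter_subset I i))
  empty_mem := Set.mem_iInter.mpr fun i => (hI i).empty_mem
  subset_mem _ _ hA hBA := Set.mem_iInter.mpr fun i =>
    (hI i).subset_mem (Set.mem_iInter.mp hA i) hBA
  union_mem _ _ hA hB := Set.mem_iInter.mpr fun i =>
    (hI i).union_mem (Set.mem_iInter.mp hA i) (Set.mem_iInter.mp hB i)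
  translate_mem x _ hA := Set.mem_iInter.mpr fun i =>
    (hI i).translate_mem x (Set.mem_iInter.mp hA i)

theorem finset_mul_mem {I : Set (Set G)} (hI : IsInvariantIdeal G I) (F : Finset G)
    {M : Set G} (hM : M ∈ I) : (F : Set G) * M ∈ I := by
  classical
  induction F using Finset.induction_on with
  | empty => simpa using hI.empty_mem
  | insert a s _ ih =>
    rw [Finset.coe_insert, Set.insert_eq, Set.union_mul, Set.singleton_mul]
    exact hI.union_mem (hI.translate_mem a hM) ih

end IsInvariantIdeal

theorem IsLarge.isILarge {I : Set (Set G)} (hI : ∅ ∈ I) {A : Set G} (hA : IsLarge A) :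
    IsILarge I A := by
  obtain ⟨F, hF⟩ := hA
  exact ⟨F, by rwa [hF, Set.sdiff_self]⟩

theorem isLarge_union_compl_finset_mul (F : Finset G) (L : Set G) :
    IsLarge (L ∪ (Set.univ \ ((F : Set G) * L))) := by
  classical
  refine ⟨insert 1 F, Set.eq_univ_of_forall fun x => ?_⟩
  by_cases hx : x ∈ (F : Set G) * L
  · exact Set.mul_subset_mul (by simp) Set.subset_union_left hx
  · exact ⟨1, by simp, x, Or.inr ⟨trivial, hx⟩, one_mul x⟩

theorem IsILarge.mono {I J : Set (Set G)} (hJI : J ⊆ I) {A : Set G} (hA : IsILarge J A) :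
    IsILarge I A :=
  let ⟨F, hF⟩ := hA
  ⟨F, hJI hF⟩

/-- `I`-largeness is insensitive to sets of `I`. -/
theorem IsILarge.of_subset_union {I : Set (Set G)} (hI : IsInvariantIdeal G I)
    {P Q R : Set G} (hQ : IsILarge I Q) (hR : R ∈ I) (hQPR : Q ⊆ P ∪ R) : IsILarge I P := by
  obtain ⟨F, hF⟩ := hQ
  refine ⟨F, hI.subset_mem (hI.union_mem hF (hI.finset_mul_mem F hR)) ?_⟩
  intro x ⟨_, hxP⟩
  by_cases hxQ : x ∈ (F : Set G) * Q
  · have hxPR := (Set.mul_union ..).subset (Set.mul_subset_mul_left hQPR hxQ)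
    exact Or.inr (hxPR.resolve_left hxP)
  · exact Or.inl ⟨trivial, hxQ⟩

theorem IsInvariantIdeal.isISmall_of_mem {I : Set (Set G)} (hI : IsInvariantIdeal G I)
    {A : Set G} (hA : A ∈ I) : IsISmall I A :=
  fun _ hL => hL.of_subset_union hI hA (Set.subset_sdiff_union _ _)

theorem IsISmall.mono {I J : Set (Set G)} (hJI : J ⊆ I) (hJ : ∅ ∈ J)
    (hI : IsInvariantIdeal G I) {A : Set G} (hA : IsISmall J A) : IsISmall I A := by
  rintro L ⟨F, hF⟩
  have hLM := (isLarge_union_compl_finset_mul F L).isILarge hJ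
  refine ((hA _ hLM).mono hJI).of_subset_union hI hF ?_
  rintro x ⟨hx | hx, hxA⟩
  exacts [Or.inl ⟨hx, hxA⟩, Or.inr hx]

end

/-- The intersection of a nonempty family of `S`-complete invariant ideals on a group `G`
is an `S`-complete invariant ideal on `G`. -/
theorem iInter_sComplete {G : Type*} [Group G] {ι : Type*} [Nonempty ι]
    (I : ι → Set (Set G)) (hI : ∀ i, IsInvariantIdeal G (I i))
    (hc : ∀ i, {A : Set G | IsISmall (I i) A} = I i) :
    IsInvariantIdeal G (⋂ i, I i) ∧
    {A : Set G | IsISmall (⋂ i, I i) A} = ⋂ i, I i := by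
  have hJ := IsInvariantIdeal.iInter hI
  refine ⟨hJ, Set.Subset.antisymm (fun A hA => Set.mem_iInter.mpr fun i => ?_)
    fun A hA => hJ.isISmall_of_mem hA⟩
  rw [← hc i]
  exact IsISmall.mono (Set.iInter_subset I i) hJ.empty_mem (hI i) hA
end

section
/- Let G be an amenable group. For every invariant ideal I on G there exists a Banach measure μ on G such that I ⊆ N_μ, i.e., μ(A) = 0 for every A ∈ I. -/
/-!
Densities along Følner sets are almost invariant, so their limits along an ultrafilter form a
Banach measure. To make it vanish on `I`, the Følner sets must eventually avoid every `A ∈ I`: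
a right translate `E₀ g` of a Følner set `E₀` is again Følner with the same ratios, and it misses
`A` as soon as `g ∉ ⋃_{e ∈ E₀} e⁻¹A`, a member of the proper ideal `I`, hence not all of `G`.
-/

open scoped Pointwise Topology

/-- A *Banach measure* on a group `G`: a finitely additive, left-invariant probability
"measure" defined on all subsets of `G`, with values in `[0,1]`. -/
structure BanachMeasure (G : Type*) [Group G] where
  toFun : Set G → ℝ
  nonneg : ∀ A : Set G, 0 ≤ toFun A
  le_one : ∀ A : Set G, toFun A ≤ 1
  additive : ∀ A B : Set G, Disjoint A B → toFun (A ∪ B) = toFun A + toFun B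
  measure_univ : toFun Set.univ = 1
  invariant : ∀ (x : G) (A : Set G), toFun ((fun a => x * a) '' A) = toFun A

/-- The Følner condition: for every finite `F ⊆ G` and `ε > 0` there is a nonempty finite
`E ⊆ G` with `|E △ xE| < ε·|E|` for all `x ∈ F`.  A group is *amenable* iff it satisfies it. -/
def FolnerCond (G : Type*) [Group G] : Prop :=
  ∀ (F : Finset G) (ε : ℝ), 0 < ε → ∃ E : Finset G, E.Nonempty ∧
    ∀ x ∈ F, ((symmDiff (E : Set G) ((fun a => x * a) '' (E : Set G))).ncard : ℝ) < ε * E.card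

open Filter Set

section Density

variable {α : Type*}

noncomputable def density (E : Finset α) (B : Set α) : ℝ :=
  ((E : Set α) ∩ B).ncard / E.card

lemma density_nonneg (E : Finset α) (B : Set α) : 0 ≤ density E B := by
  unfold density; positivity

lemma density_le_one (E : Finset α) (B : Set α) : density E B ≤ 1 := by
  refine div_le_one_of_le₀ ?_ (Nat.cast_nonneg _)
  rw [← ncard_coe_finset]
  exact_mod_cast ncard_le_ncard inter_subset_left E.finite_toSet

lemma density_union {A B : Set α} (hAB : Disjoint A B) (E : Finset α) :
    density E (A ∪ B) = density E A + density E B := by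
  rw [density, density, density, ← add_div, inter_union_distrib_left,
    ncard_union_eq (hAB.mono inter_subset_right inter_subset_right)
      (E.finite_toSet.inter_of_left A) (E.finite_toSet.inter_of_left B), Nat.cast_add]

lemma density_univ {E : Finset α} (hE : E.Nonempty) : density E univ = 1 := by
  rw [density, inter_univ, ncard_coe_finset, div_self (by exact_mod_cast hE.card_pos.ne')]

lemma density_eq_zero_of_disjoint {E : Finset α} {A : Set α} (h : Disjoint (E : Set α) A) :
    density E A = 0 := by
  rw [density, h.inter_eq, ncard_empty, Nat.cast_zero, zero_div]

lemma ncard_inter_le_add_ncard_symmDiff {S T : Set α} (hS : S.Finite) (hT : T.Finite)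
    (A : Set α) : (T ∩ A).ncard ≤ (S ∩ A).ncard + (symmDiff S T).ncard := by
  have hsub : T ∩ A ⊆ (S ∩ A) ∪ symmDiff S T := fun y hy => by
    by_cases h : y ∈ S
    · exact Or.inl ⟨h, hy.2⟩
    · exact Or.inr (Or.inr ⟨hy.1, h⟩)
  calc (T ∩ A).ncard ≤ ((S ∩ A) ∪ symmDiff S T).ncard :=
        ncard_le_ncard hsub ((hS.inter_of_left A).union (hS.sdiff.union hT.sdiff))
    _ ≤ (S ∩ A).ncard + (symmDiff S T).ncard := ncard_union_le _ _

lemma abs_ncard_inter_sub_ncard_inter_le {S T : Set α} (hS : S.Finite) (hT : T.Finite)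
    (A : Set α) : |((S ∩ A).ncard : ℝ) - (T ∩ A).ncard| ≤ (symmDiff S T).ncard := by
  have h₁ := ncard_inter_le_add_ncard_symmDiff hS hT A
  have h₂ := ncard_inter_le_add_ncard_symmDiff hT hS A
  rw [symmDiff_comm] at h₂
  rw [abs_sub_le_iff, sub_le_iff_le_add', sub_le_iff_le_add']
  exact ⟨by exact_mod_cast h₂, by exact_mod_cast h₁⟩

lemma exists_tendsto_density (U : Ultrafilter (Finset α)) (B : Set α) :
    ∃ r, Tendsto (density · B) U (𝓝 r) := by
  obtain ⟨r, -, hr⟩ := isCompact_Icc.ultrafilter_le_nhds (U.map (density · B)) <| by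
    rw [le_principal_iff, Ultrafilter.coe_map, mem_map]
    exact univ_mem' fun E => ⟨density_nonneg E B, density_le_one E B⟩
  exact ⟨r, hr⟩

lemma tendsto_density_limUnder (U : Ultrafilter (Finset α)) (B : Set α) :
    Tendsto (density · B) U (𝓝 (limUnder U (density · B))) :=
  tendsto_nhds_limUnder (exists_tendsto_density U B)

end Density

section FolnerRatio

variable {G : Type*} [Group G]

noncomputable def folnerRatio (x : G) (E : Finset G) : ℝ :=
  (symmDiff (E : Set G) (x • (E : Set G))).ncard / E.card

lemma folnerRatio_nonneg (x : G) (E : Finset G) : 0 ≤ folnerRatio x E := by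
  unfold folnerRatio; positivity

lemma folnerRatio_op_smul [DecidableEq G] (x g : G) (E : Finset G) :
    folnerRatio x (MulOpposite.op g • E) = folnerRatio x E := by
  rw [folnerRatio, folnerRatio, Finset.coe_smul_finset, smul_comm x, ← smul_set_symmDiff,
    ncard_smul_set, Finset.card_smul_finset]

lemma abs_density_smul_sub_le (x : G) (A : Set G) (E : Finset G) :
    |density E (x • A) - density E A| ≤ folnerRatio x⁻¹ E := by
  have htrans : ((E : Set G) ∩ x • A).ncard = (x⁻¹ • (E : Set G) ∩ A).ncard := by
    rw [← ncard_smul_set x (_ ∩ A), smul_set_inter, smul_inv_smul]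
  rw [density, density, folnerRatio, div_sub_div_same, abs_div, Nat.abs_cast, htrans]
  gcongr
  rw [abs_sub_comm]
  exact abs_ncard_inter_sub_ncard_inter_le E.finite_toSet (E.finite_toSet.smul_set (a := x⁻¹)) A

end FolnerRatio

namespace IsInvariantIdeal

variable {G : Type*} [Group G] {I : Set (Set G)}

lemma univ_notMem (hI : IsInvariantIdeal G I) : univ ∉ I := fun h =>
  hI.proper (eq_univ_of_forall fun A => hI.subset_mem h (subset_univ A))

lemma biUnion_mem {ι : Type*} (hI : IsInvariantIdeal G I) (s : Finset ι) {f : ι → Set G}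
    (hf : ∀ i ∈ s, f i ∈ I) : (⋃ i ∈ s, f i) ∈ I := by
  classical
  induction s using Finset.induction_on with
  | empty => simpa using hI.empty_mem
  | insert a s _ ih =>
    rw [Finset.set_biUnion_insert]
    exact hI.union_mem (hf a (Finset.mem_insert_self a s))
      (ih fun i hi => hf i (Finset.mem_insert_of_mem hi))

lemma exists_forall_mul_notMem (hI : IsInvariantIdeal G I) (s : Finset G) {A : Set G}
    (hA : A ∈ I) : ∃ g, ∀ e ∈ s, e * g ∉ A := by
  have hmem : (⋃ e ∈ s, e⁻¹ • A) ∈ I := hI.biUnion_mem s fun e _ => hI.translate_mem e⁻¹ hA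
  obtain ⟨g, hg⟩ := (ne_univ_iff_exists_notMem _).1 fun h => hI.univ_notMem (h ▸ hmem)
  refine ⟨g, fun e he hgA => hg (mem_biUnion he ?_)⟩
  rwa [mem_smul_set_iff_inv_smul_mem, inv_inv, smul_eq_mul]

end IsInvariantIdeal

section FolnerFilter

variable {G : Type*} [Group G] {I : Set (Set G)}

def IsFolnerAvoiding (F : Finset G) (ε : ℝ) (A : Set G) (E : Finset G) : Prop :=
  E.Nonempty ∧ Disjoint (E : Set G) A ∧ ∀ x ∈ F, folnerRatio x E < ε

lemma IsFolnerAvoiding.mono {F F' : Finset G} {ε ε' : ℝ} {A A' : Set G} {E : Finset G}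
    (h : IsFolnerAvoiding F ε A E) (hF : F' ⊆ F) (hε : ε ≤ ε') (hA : A' ⊆ A) :
    IsFolnerAvoiding F' ε' A' E :=
  ⟨h.1, h.2.1.mono_right hA, fun x hx => (h.2.2 x (hF hx)).trans_le hε⟩

lemma exists_isFolnerAvoiding (hG : FolnerCond G) (hI : IsInvariantIdeal G I) (F : Finset G)
    {ε : ℝ} (hε : 0 < ε) {A : Set G} (hA : A ∈ I) : ∃ E, IsFolnerAvoiding F ε A E := by
  classical
  obtain ⟨E₀, hne, hfol⟩ := hG F ε hε
  obtain ⟨g, hg⟩ := hI.exists_forall_mul_notMem E₀ hA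
  refine ⟨MulOpposite.op g • E₀, Finset.smul_finset_nonempty.2 hne, ?_, fun x hx => ?_⟩
  · rw [Finset.coe_smul_finset, disjoint_left]
    rintro _ ⟨e, he, rfl⟩
    exact hg e he
  · rw [folnerRatio_op_smul, folnerRatio, div_lt_iff₀ (by exact_mod_cast hne.card_pos)]
    exact hfol x hx

variable (I) in
def folnerFilter : Filter (Finset G) :=
  ⨅ i : Finset G × Ioi (0 : ℝ) × I, 𝓟 {E | IsFolnerAvoiding i.1 i.2.1 i.2.2 E}

lemma eventually_isFolnerAvoiding_folnerFilter (F : Finset G) {ε : ℝ} (hε : 0 < ε) {A : Set G}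
    (hA : A ∈ I) : ∀ᶠ E in folnerFilter I, IsFolnerAvoiding F ε A E :=
  mem_iInf_of_mem (F, ⟨ε, hε⟩, ⟨A, hA⟩) (mem_principal_self _)

lemma folnerFilter_neBot (hG : FolnerCond G) (hI : IsInvariantIdeal G I) :
    (folnerFilter I).NeBot := by
  classical
  have : Nonempty (Finset G × Ioi (0 : ℝ) × I) :=
    ⟨(∅, ⟨1, mem_Ioi.2 one_pos⟩, ⟨∅, hI.empty_mem⟩)⟩
  refine iInf_neBot_of_directed' ?_ fun ⟨F, ε, A⟩ =>
    principal_neBot_iff.2 (exists_isFolnerAvoiding hG hI F ε.2 A.2)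
  rintro ⟨F₁, ε₁, A₁⟩ ⟨F₂, ε₂, A₂⟩
  exact ⟨(F₁ ∪ F₂, ⟨min ε₁ ε₂, mem_Ioi.2 (lt_min ε₁.2 ε₂.2)⟩, ⟨A₁ ∪ A₂, hI.union_mem A₁.2 A₂.2⟩),
    principal_mono.2 fun E hE =>
      hE.mono Finset.subset_union_left (min_le_left _ _) subset_union_left,
    principal_mono.2 fun E hE =>
      hE.mono Finset.subset_union_right (min_le_right _ _) subset_union_right⟩

lemma eventually_nonempty_folnerFilter (hI : IsInvariantIdeal G I) :
    ∀ᶠ E in folnerFilter I, E.Nonempty :=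
  (eventually_isFolnerAvoiding_folnerFilter ∅ one_pos hI.empty_mem).mono fun _ hE => hE.1

lemma tendsto_folnerRatio_folnerFilter (hI : IsInvariantIdeal G I) (x : G) :
    Tendsto (folnerRatio x) (folnerFilter I) (𝓝 0) :=
  tendsto_order.2 ⟨fun _ ha => univ_mem' fun E => ha.trans_le (folnerRatio_nonneg x E),
    fun _ hε => (eventually_isFolnerAvoiding_folnerFilter {x} hε hI.empty_mem).mono
      fun _ hE => hE.2.2 x (Finset.mem_singleton_self x)⟩

end FolnerFilter

namespace BanachMeasure

variable {G : Type*} [Group G] (U : Ultrafilter (Finset G))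

noncomputable def ofUltrafilter (hne : ∀ᶠ E in (U : Filter (Finset G)), E.Nonempty)
    (hfol : ∀ x : G, Tendsto (folnerRatio x) U (𝓝 0)) : BanachMeasure G where
  toFun B := limUnder U (density · B)
  nonneg B := ge_of_tendsto' (tendsto_density_limUnder U B) (density_nonneg · B)
  le_one B := le_of_tendsto' (tendsto_density_limUnder U B) (density_le_one · B)
  additive A B hAB := tendsto_nhds_unique (tendsto_density_limUnder U _) <|
    ((tendsto_density_limUnder U A).add (tendsto_density_limUnder U B)).congr fun E =>
      (density_union hAB E).symm
  measure_univ := tendsto_nhds_unique (tendsto_density_limUnder U univ) <|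
    tendsto_const_nhds.congr' (hne.mono fun _ hE => (density_univ hE).symm)
  invariant x A := by
    have hdiff : Tendsto (fun E => density E (x • A) - density E A) U (𝓝 0) :=
      squeeze_zero_norm (fun E => (Real.norm_eq_abs _).trans_le (abs_density_smul_sub_le x A E))
        (hfol x⁻¹)
    have hlim := (hdiff.add (tendsto_density_limUnder U A)).congr fun E => sub_add_cancel _ _
    rw [zero_add] at hlim
    exact tendsto_nhds_unique (tendsto_density_limUnder U _) hlim

lemma ofUltrafilter_apply_eq_zero {hne : ∀ᶠ E in (U : Filter (Finset G)), E.Nonempty}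
    {hfol : ∀ x : G, Tendsto (folnerRatio x) U (𝓝 0)} {A : Set G}
    (hA : ∀ᶠ E : Finset G in U, Disjoint (E : Set G) A) : (ofUltrafilter U hne hfol).toFun A = 0 :=
  tendsto_nhds_unique (tendsto_density_limUnder U A) <|
    tendsto_const_nhds.congr' (hA.mono fun _ hE => (density_eq_zero_of_disjoint hE).symm)

end BanachMeasure

/-- In an amenable group, every invariant ideal `I` lies in the null ideal `N_μ` of
some Banach measure `μ`. -/
theorem exists_banachMeasure_null_on_ideal {G : Type*} [Group G] (hG : FolnerCond G)
    (I : Set (Set G)) (hI : IsInvariantIdeal G I) :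
    ∃ μ : BanachMeasure G, ∀ A ∈ I, μ.toFun A = 0 := by
  have := folnerFilter_neBot hG hI
  let U := Ultrafilter.of (folnerFilter I)
  have hU : ↑U ≤ folnerFilter I := Ultrafilter.of_le _
  refine ⟨.ofUltrafilter U (hU (eventually_nonempty_folnerFilter hI))
    fun x => (tendsto_folnerRatio_folnerFilter hI x).mono_left hU, fun A hA => ?_⟩
  exact BanachMeasure.ofUltrafilter_apply_eq_zero U <|
    hU ((eventually_isFolnerAvoiding_folnerFilter ∅ one_pos hA).mono fun _ hE => hE.2.1)
end

section
/- Let G be an amenable group and I an invariant ideal on G. Then I ⊆ N_I ⊆ S_I; that is, every subset A ⊆ G satisfying μ(A) = 0 for every Banach measure μ on G with I ⊆ N_μ is I-small. -/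
open scoped Pointwise Topology

/-!
Suppose `A` is null for every Banach measure annihilating `I`, but `L \ A` is not `I`-large
for some `I`-large `L`. Translating Følner sets on the right keeps them Følner, and since
`L \ A` is not `I`-large, for any `C ∈ I` some right translate of a given Følner set misses
`C ∪ (L \ A)`. Ultrafilter limits of the normalized counting measures of these translates give a
Banach measure that annihilates `I` and `L \ A`, hence also `L`. But `L` is `I`-large:
finitely many translates of `L` cover `G` up to a set in `I`, so `L` has positive measure.
-/

open Filter Set Function

section RelDensity

variable {α β : Type*}

noncomputable def relDensity (T S : Set α) : ℝ := ((S ∩ T).ncard : ℝ) / T.ncard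

lemma relDensity_nonneg (T S : Set α) : 0 ≤ relDensity T S := by
  unfold relDensity; positivity

lemma relDensity_le_one {T : Set α} (hT : T.Finite) (S : Set α) : relDensity T S ≤ 1 :=
  div_le_one_of_le₀ (by exact_mod_cast ncard_le_ncard inter_subset_right hT) (by positivity)

lemma relDensity_univ {T : Set α} (hT : T.Finite) (hne : T.Nonempty) : relDensity T univ = 1 := by
  rw [relDensity, univ_inter]
  exact div_self (by exact_mod_cast (hne.ncard_pos hT).ne')

lemma relDensity_union {T S S' : Set α} (hT : T.Finite) (h : Disjoint S S') :
    relDensity T (S ∪ S') = relDensity T S + relDensity T S' := by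
  rw [relDensity, union_inter_distrib_right, ncard_union_eq
    (h.mono inter_subset_left inter_subset_left) (hT.inter_of_right S) (hT.inter_of_right S'),
    Nat.cast_add, add_div, relDensity, relDensity]

lemma relDensity_eq_zero {T S : Set α} (h : Disjoint S T) : relDensity T S = 0 := by
  simp [relDensity, h.inter_eq]

lemma relDensity_image {f : α → β} (hf : Injective f) (T S : Set α) :
    relDensity (f '' T) (f '' S) = relDensity T S := by
  simp only [relDensity, ← image_inter hf, ncard_image_of_injective _ hf]

lemma ncard_inter_le_ncard_inter_add_ncard_symmDiff {T T' : Set α} (hT : T.Finite)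
    (hT' : T'.Finite) (S : Set α) :
    (S ∩ T').ncard ≤ (S ∩ T).ncard + (symmDiff T T').ncard := by
  have hsub : S ∩ T' ⊆ (S ∩ T) ∪ symmDiff T T' := fun x ⟨hxS, hxT'⟩ => by
    by_cases hxT : x ∈ T
    · exact Or.inl ⟨hxS, hxT⟩
    · exact Or.inr (Or.inr ⟨hxT', hxT⟩)
  calc (S ∩ T').ncard ≤ ((S ∩ T) ∪ symmDiff T T').ncard :=
        ncard_le_ncard hsub ((hT.inter_of_right S).union (hT.sdiff.union hT'.sdiff))
    _ ≤ (S ∩ T).ncard + (symmDiff T T').ncard := ncard_union_le _ _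

lemma abs_relDensity_sub_le {T T' : Set α} (hT : T.Finite) (hT' : T'.Finite)
    (hcard : T'.ncard = T.ncard) (S : Set α) :
    |relDensity T' S - relDensity T S| ≤ (symmDiff T T').ncard / T.ncard := by
  have h₁ : ((S ∩ T').ncard : ℝ) ≤ (S ∩ T).ncard + (symmDiff T T').ncard := by
    exact_mod_cast ncard_inter_le_ncard_inter_add_ncard_symmDiff hT hT' S
  have h₂ : ((S ∩ T).ncard : ℝ) ≤ (S ∩ T').ncard + (symmDiff T T').ncard := by
    exact_mod_cast symmDiff_comm T T' ▸ ncard_inter_le_ncard_inter_add_ncard_symmDiff hT' hT S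
  rw [relDensity, relDensity, hcard, ← sub_div, abs_div, Nat.abs_cast]
  gcongr
  exact abs_sub_le_iff.2 ⟨by linarith, by linarith⟩

end RelDensity

section Group

variable {G : Type*} [Group G]

lemma abs_relDensity_image_mul_left_sub_le {T : Set G} (hT : T.Finite) (x : G) (S : Set G) :
    |relDensity T ((x * ·) '' S) - relDensity T S|
      ≤ (symmDiff T ((x * ·) '' T)).ncard / T.ncard := by
  set T' := (x⁻¹ * ·) '' T
  have hT'T : (x * ·) '' T' = T := by
    simp only [T', image_image, mul_inv_cancel_left, image_id']
  have hshift : relDensity T ((x * ·) '' S) = relDensity T' S := by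
    rw [← relDensity_image (mul_right_injective x) T' S, hT'T]
  have hsymm : (symmDiff T ((x * ·) '' T)).ncard = (symmDiff T T').ncard := by
    rw [← ncard_image_of_injective (symmDiff T T') (mul_right_injective x), image_symmDiff
      (mul_right_injective x), hT'T, symmDiff_comm]
  rw [hshift, hsymm]
  exact abs_relDensity_sub_le hT (hT.image _) (ncard_image_of_injective _ (mul_right_injective _)) S

lemma ncard_symmDiff_image_mul_left_image_mul_right (E : Set G) (g x : G) :
    (symmDiff ((· * g) '' E) ((x * ·) '' ((· * g) '' E))).ncard
      = (symmDiff E ((x * ·) '' E)).ncard := by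
  have hcomm : (x * ·) '' ((· * g) '' E) = (· * g) '' ((x * ·) '' E) := by
    simp only [image_image, mul_assoc]
  rw [hcomm, ← image_symmDiff (mul_left_injective g), ncard_image_of_injective _
    (mul_left_injective g)]

namespace BanachMeasure

variable (μ : BanachMeasure G)

lemma toFun_empty : μ.toFun ∅ = 0 := by
  have h := μ.additive ∅ ∅ (disjoint_empty _)
  rw [union_empty] at h
  linarith

lemma toFun_mono {S T : Set G} (h : S ⊆ T) : μ.toFun S ≤ μ.toFun T := by
  have hadd := μ.additive S (T \ S) disjoint_sdiff_right
  rw [union_sdiff_cancel h] at hadd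
  linarith [μ.nonneg (T \ S)]

lemma toFun_union_le (S T : Set G) : μ.toFun (S ∪ T) ≤ μ.toFun S + μ.toFun T := by
  have hadd := μ.additive S (T \ S) disjoint_sdiff_right
  rw [union_sdiff_self] at hadd
  linarith [μ.toFun_mono (sdiff_subset : T \ S ⊆ T)]

lemma toFun_finset_mul_le (F : Finset G) (S : Set G) :
    μ.toFun ((F : Set G) * S) ≤ F.card * μ.toFun S := by
  classical
  induction F using Finset.induction with
  | empty => simp [μ.toFun_empty]
  | insert a F ha ih =>
    rw [Finset.coe_insert, insert_eq, union_mul, singleton_mul, Finset.card_insert_of_notMem ha]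
    calc μ.toFun ((a * ·) '' S ∪ (F : Set G) * S)
        ≤ μ.toFun S + μ.toFun ((F : Set G) * S) := by
          rw [← μ.invariant a S]; exact μ.toFun_union_le _ _
      _ ≤ ((F.card + 1 : ℕ) : ℝ) * μ.toFun S := by push_cast; linarith

lemma toFun_pos_of_isILarge {I : Set (Set G)} (hμ : ∀ C ∈ I, μ.toFun C = 0) {L : Set G}
    (hL : IsILarge I L) : 0 < μ.toFun L := by
  obtain ⟨F, hF⟩ := hL
  have hFL : μ.toFun ((F : Set G) * L) = 1 := by
    have h := μ.additive ((F : Set G) * L) (univ \ ((F : Set G) * L)) disjoint_sdiff_right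
    rwa [union_sdiff_cancel (subset_univ _), μ.measure_univ, hμ _ hF, add_zero, eq_comm] at h
  have h := μ.toFun_finset_mul_le F L
  rw [hFL] at h
  exact pos_of_mul_pos_right (one_pos.trans_le h) (Nat.cast_nonneg _)

end BanachMeasure

/-- The limit of `f` along an ultrafilter finer than `l`, which exists by compactness of
`[0, 1]`. -/
lemma exists_banachMeasure_of_tendsto {ι : Type*} (l : Filter ι) [l.NeBot]
    (f : ι → Set G → ℝ) (nonneg : ∀ i S, 0 ≤ f i S) (le_one : ∀ i S, f i S ≤ 1)
    (additive : ∀ i S S', Disjoint S S' → f i (S ∪ S') = f i S + f i S')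
    (measure_univ : ∀ i, f i univ = 1)
    (invariant : ∀ x S, Tendsto (fun i => f i ((x * ·) '' S) - f i S) l (𝓝 0)) :
    ∃ μ : BanachMeasure G, ∀ S, (∀ᶠ i in l, f i S = 0) → μ.toFun S = 0 := by
  set U := Ultrafilter.of l
  have hU : (U : Filter ι) ≤ l := Ultrafilter.of_le l
  have hlim : ∀ S, ∃ r, Tendsto (f · S) U (𝓝 r) := fun S => by
    obtain ⟨r, -, hr⟩ := isCompact_Icc.ultrafilter_le_nhds (U.map (f · S)) (by
      rw [Ultrafilter.coe_map, le_principal_iff]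
      exact mem_map.2 (univ_mem' fun i => ⟨nonneg i S, le_one i S⟩))
    exact ⟨r, hr⟩
  choose μ hμ using hlim
  refine ⟨{ toFun := μ
            nonneg := fun S => ge_of_tendsto' (hμ S) (nonneg · S)
            le_one := fun S => le_of_tendsto' (hμ S) (le_one · S)
            additive := fun S S' h => tendsto_nhds_unique (hμ _)
              (((hμ S).add (hμ S')).congr fun i => (additive i S S' h).symm)
            measure_univ := tendsto_nhds_unique (hμ _)
              (tendsto_const_nhds.congr fun i => (measure_univ i).symm)
            invariant := fun x S => by
              have h := ((invariant x S).mono_left hU).add (hμ S)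
              simp only [sub_add_cancel, zero_add] at h
              exact tendsto_nhds_unique (hμ _) h },
    fun S hS => tendsto_nhds_unique (hμ S) (tendsto_const_nhds.congr' ?_)⟩
  filter_upwards [hU hS] with i hi
  exact hi.symm

variable {I : Set (Set G)}

lemma IsInvariantIdeal.finset_mul_mem_s9 (hI : IsInvariantIdeal G I) (F : Finset G) {C : Set G}
    (hC : C ∈ I) : (F : Set G) * C ∈ I := by
  classical
  induction F using Finset.induction with
  | empty => simpa using hI.empty_mem
  | insert a F _ ih =>
    rw [Finset.coe_insert, insert_eq, union_mul, singleton_mul]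
    exact hI.union_mem (hI.translate_mem a hC) ih

lemma IsInvariantIdeal.exists_image_mul_right_disjoint (hI : IsInvariantIdeal G I) {B C : Set G}
    (hB : ¬ IsILarge I B) (hC : C ∈ I) (E : Finset G) :
    ∃ g, Disjoint ((· * g) '' (E : Set G)) (C ∪ B) := by
  classical
  by_contra! h
  refine hB ⟨E⁻¹, hI.subset_mem (hI.finset_mul_mem_s9 E⁻¹ hC) fun g ⟨_, hgB⟩ => ?_⟩
  obtain ⟨_, ⟨e, he, rfl⟩, heg⟩ := not_disjoint_iff.1 (h g)
  have he' : e⁻¹ ∈ ((E⁻¹ : Finset G) : Set G) := by simpa using he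
  rcases heg with hegC | hegB
  · exact ⟨e⁻¹, he', e * g, hegC, by group⟩
  · exact (hgB ⟨e⁻¹, he', e * g, hegB, by group⟩).elim

lemma exists_folner_disjoint (hG : FolnerCond G) (hI : IsInvariantIdeal G I) {B C : Set G}
    (hB : ¬ IsILarge I B) (hC : C ∈ I) (F : Finset G) {ε : ℝ} (hε : 0 < ε) :
    ∃ T : Set G, T.Finite ∧ T.Nonempty ∧ Disjoint T (C ∪ B) ∧
      ∀ x ∈ F, ((symmDiff T ((x * ·) '' T)).ncard : ℝ) < ε * T.ncard := by
  obtain ⟨E, hne, hE⟩ := hG F ε hε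
  obtain ⟨g, hg⟩ := hI.exists_image_mul_right_disjoint hB hC E
  refine ⟨(· * g) '' E, E.finite_toSet.image _, (Finset.coe_nonempty.2 hne).image _, hg,
    fun x hx => ?_⟩
  rw [ncard_symmDiff_image_mul_left_image_mul_right, ncard_image_of_injective _
    (mul_left_injective g), ncard_coe_finset]
  exact hE x hx

lemma exists_banachMeasure_null_of_not_isILarge (hG : FolnerCond G) (hI : IsInvariantIdeal G I)
    {B : Set G} (hB : ¬ IsILarge I B) :
    ∃ μ : BanachMeasure G, (∀ C ∈ I, μ.toFun C = 0) ∧ μ.toFun B = 0 := by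
  classical
  have : IsDirectedOrder (Finset G × ℕ × {C // C ∈ I}) := ⟨fun i j =>
    ⟨(i.1 ∪ j.1, max i.2.1 j.2.1, ⟨i.2.2 ∪ j.2.2, hI.union_mem i.2.2.2 j.2.2.2⟩),
      ⟨Finset.subset_union_left, le_max_left _ _, subset_union_left⟩,
      ⟨Finset.subset_union_right, le_max_right _ _, subset_union_right⟩⟩⟩
  have : Nonempty {C // C ∈ I} := ⟨⟨∅, hI.empty_mem⟩⟩
  -- `T (F, n, C)` is `(F, 1 / (n + 1))`-Følner and misses `C ∪ B`.
  choose T hTfin hTne hTdisj hTfol using fun i : Finset G × ℕ × {C // C ∈ I} =>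
    exists_folner_disjoint hG hI hB i.2.2.2 i.1 (Nat.one_div_pos_of_nat (n := i.2.1))
  have hn : Tendsto (fun i : Finset G × ℕ × {C // C ∈ I} => 1 / ((i.2.1 : ℝ) + 1)) atTop
      (𝓝 0) :=
    tendsto_one_div_add_atTop_nhds_zero_nat.comp
      (tendsto_atTop_atTop_of_monotone (fun _ _ h => h.2.1)
        fun n => ⟨(∅, n, Classical.arbitrary _), le_rfl⟩)
  have hinv : ∀ x S, Tendsto (fun i => relDensity (T i) ((x * ·) '' S) - relDensity (T i) S)
      atTop (𝓝 0) := fun x S => squeeze_zero_norm' (by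
    filter_upwards [eventually_ge_atTop ({x}, 0, Classical.arbitrary _)] with i hi
    refine (abs_relDensity_image_mul_left_sub_le (hTfin i) x S).trans ?_
    rw [div_le_iff₀ (by exact_mod_cast (hTne i).ncard_pos (hTfin i))]
    exact (hTfol i x (hi.1 (Finset.mem_singleton_self x))).le) hn
  obtain ⟨μ, hμ⟩ := exists_banachMeasure_of_tendsto atTop (fun i => relDensity (T i))
    (fun i => relDensity_nonneg (T i)) (fun i => relDensity_le_one (hTfin i))
    (fun i _ _ => relDensity_union (hTfin i)) (fun i => relDensity_univ (hTfin i) (hTne i)) hinv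
  refine ⟨μ, fun C hC => hμ C ?_, hμ B (.of_forall fun i =>
    relDensity_eq_zero ((hTdisj i).mono_right subset_union_right).symm)⟩
  filter_upwards [eventually_ge_atTop (∅, 0, ⟨C, hC⟩)] with i hi
  have hCi : C ⊆ i.2.2 := hi.2.2
  exact relDensity_eq_zero ((hTdisj i).mono_right (hCi.trans subset_union_left)).symm

end Group

/-- For an invariant ideal `I` on an amenable group `G` we have `I ⊆ N_I ⊆ S_I`:
every set in `I` is `μ`-null for each Banach measure `μ` that annihilates `I`, and every
set that is `μ`-null for all such `μ` is `I`-small. -/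
theorem ideal_subset_nCompletion_subset_sCompletion {G : Type*} [Group G]
    (hG : FolnerCond G) (I : Set (Set G)) (hI : IsInvariantIdeal G I) :
    (∀ A ∈ I, ∀ μ : BanachMeasure G, (∀ B ∈ I, μ.toFun B = 0) → μ.toFun A = 0) ∧
    (∀ A : Set G,
      (∀ μ : BanachMeasure G, (∀ B ∈ I, μ.toFun B = 0) → μ.toFun A = 0) → IsISmall I A) := by
  refine ⟨fun A hA μ hμ => hμ A hA, fun A hA L hL => ?_⟩
  by_contra hLA
  obtain ⟨μ, hμI, hμLA⟩ := exists_banachMeasure_null_of_not_isILarge hG hI hLA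
  have hL_le : μ.toFun L ≤ μ.toFun A + μ.toFun (L \ A) :=
    (μ.toFun_mono (sdiff_subset_iff.1 subset_rfl)).trans (μ.toFun_union_le A (L \ A))
  linarith [μ.toFun_pos_of_isILarge hμI hL, hA μ hμI]
end

section
/- If a group G contains a subgroup isomorphic to the free group F_2 on two generators, then G can be written as a union G = A ∪ B of two subsets each of which has infinite pack_2-index: there exist infinite sets D_A, D_B ⊆ G such that the translates {dA : d ∈ D_A} are pairwise disjoint and the translates {dB : d ∈ D_B} are pairwise disjoint. -/
/-!
In `F₂ = ⟨a, b⟩` let `Sₓ` be the set of elements whose reduced word does not begin with `x`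
or `x⁻¹`. Then `S_a ∪ S_b = F₂`, and `aⁿ * w` begins with `a` for `w ∈ S_a` and `n > 0`, so the
translates `aⁿ S_a` (`n ∈ ℕ`) are pairwise disjoint; likewise for `b`. A right transversal of
`φ(F₂)` in `G` gives a map `f : G → F₂` with `f (φ u * g) = u * f g`, and the preimages
`f⁻¹(S_b)`, `f⁻¹(S_a)` cover `G` with pairwise disjoint translates by the powers of `φ b`,
resp. `φ a`.
-/

open Function Set

theorem pairwise_disjoint_pow_mul_image {M : Type*} [LeftCancelMonoid M] {t : M} {S : Set M}
    (h : ∀ n, 0 < n → ∀ s ∈ S, t ^ n * s ∉ S) :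
    Pairwise (Disjoint on fun n : ℕ => (t ^ n * ·) '' S) := by
  rw [pairwise_disjoint_on]
  intro m n hmn
  rw [Set.disjoint_left]
  rintro _ ⟨a, ha, rfl⟩ ⟨b, hb, hba : t ^ n * b = t ^ m * a⟩
  obtain ⟨k, rfl⟩ := Nat.exists_eq_add_of_lt hmn
  rw [add_assoc, pow_add, mul_assoc] at hba
  exact h (k + 1) k.succ_pos b hb (mul_left_cancel hba ▸ ha)

theorem pairwise_disjoint_mul_image_preimage {ι M N : Type*} [Mul M] [Mul N] {φ : M → N}
    {f : N → M} (hf : ∀ u g, f (φ u * g) = u * f g) {u : ι → M} {S : Set M}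
    (h : Pairwise (Disjoint on fun i => (u i * ·) '' S)) :
    Pairwise (Disjoint on fun i => (φ (u i) * ·) '' (f ⁻¹' S)) := by
  intro i j hij
  rw [onFun, Set.disjoint_left]
  rintro _ ⟨a, ha, rfl⟩ ⟨b, hb, hba : φ (u j) * b = φ (u i) * a⟩
  refine Set.disjoint_left.1 (h hij) ⟨f a, ha, (hf _ _).symm⟩ ⟨f b, hb, ?_⟩
  exact (hf _ _).symm.trans (congrArg f hba)

theorem Subgroup.exists_mul_left_equivariant {G : Type*} [Group G] (H : Subgroup G) :
    ∃ f : G → H, ∀ (h : H) (g : G), f (h * g) = h * f g := by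
  obtain ⟨T, hT, -⟩ := H.exists_isComplement_right 1
  exact ⟨fun g => (hT.equiv g).1, fun h g => by simp only [hT.equiv_mul_left]⟩

theorem MonoidHom.exists_mul_left_equivariant_of_injective {F G : Type*} [Group F] [Group G]
    {φ : F →* G} (hφ : Injective φ) : ∃ f : G → F, ∀ u g, f (φ u * g) = u * f g := by
  obtain ⟨f, hf⟩ := φ.range.exists_mul_left_equivariant
  let e := MonoidHom.ofInjective hφ
  refine ⟨fun g => e.symm (f g), fun u g => ?_⟩
  dsimp only
  rw [show φ u = (e u : G) from rfl, hf, map_mul, MulEquiv.symm_apply_apply]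

namespace FreeGroup

variable {α : Type*} [DecidableEq α]

def firstLetter (w : FreeGroup α) : Option α :=
  w.toWord.head?.map Prod.fst

theorem toWord_of_pow_mul {i : α} {w : FreeGroup α} (hw : w.firstLetter ≠ some i) (n : ℕ) :
    (of i ^ n * w).toWord = List.replicate n (i, true) ++ w.toWord := by
  rw [toWord_mul, toWord_of_pow, IsReduced.reduce_eq]
  refine List.isChain_append.2 ⟨List.isChain_replicate_of_rel _ fun _ => rfl, isReduced_toWord,
    fun x hx y hy hxy => absurd ?_ hw⟩
  obtain rfl := List.eq_of_mem_replicate (List.mem_of_mem_getLast? hx)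
  rw [firstLetter, Option.mem_def.1 hy, Option.map_some, ← hxy]

theorem firstLetter_of_pow_mul {i : α} {w : FreeGroup α} (hw : w.firstLetter ≠ some i) {n : ℕ}
    (hn : 0 < n) : (of i ^ n * w).firstLetter = some i := by
  obtain ⟨k, rfl⟩ := Nat.exists_eq_add_of_lt hn
  rw [firstLetter, toWord_of_pow_mul hw, List.replicate_succ, List.cons_append]
  rfl

theorem pairwise_disjoint_of_pow_mul_image (i : α) :
    Pairwise (Disjoint on fun n : ℕ => (of i ^ n * ·) '' {w | w.firstLetter ≠ some i}) :=
  pairwise_disjoint_pow_mul_image fun _ hn _ hw => not_not.2 (firstLetter_of_pow_mul hw hn)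

theorem of_pow_injective (i : α) : Injective fun n : ℕ => of i ^ n :=
  LeftInverse.injective (g := norm) (norm_of_pow i)

theorem setOf_firstLetter_ne_union {i j : α} (hij : i ≠ j) :
    {w : FreeGroup α | w.firstLetter ≠ some i} ∪ {w | w.firstLetter ≠ some j} = univ := by
  ext w
  by_cases hw : w.firstLetter = some i <;> simp_all

end FreeGroup

/-- If a group `G` contains a subgroup isomorphic to the free group `F₂` on two generators,
then `G = A ∪ B` where both `A` and `B` have infinite `pack₂`-index: there are infinite sets
`D_A, D_B ⊆ G` whose translates of `A` (resp. `B`) are pairwise disjoint. -/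
theorem union_of_two_sets_with_infinite_pack_index {G : Type*} [Group G]
    (h : ∃ φ : FreeGroup (Fin 2) →* G, Function.Injective φ) :
    ∃ A B : Set G, A ∪ B = Set.univ ∧
      ∃ DA DB : Set G, DA.Infinite ∧ DB.Infinite ∧
        DA.Pairwise (fun d d' => Disjoint ((fun a => d * a) '' A) ((fun a => d' * a) '' A)) ∧
        DB.Pairwise (fun d d' => Disjoint ((fun a => d * a) '' B) ((fun a => d' * a) '' B)) := by
  obtain ⟨φ, hφ⟩ := h
  obtain ⟨f, hf⟩ := φ.exists_mul_left_equivariant_of_injective hφ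
  have translates_disjoint (i : Fin 2) :=
    pairwise_disjoint_mul_image_preimage hf (FreeGroup.pairwise_disjoint_of_pow_mul_image i)
  let S (i : Fin 2) : Set (FreeGroup (Fin 2)) := {w | w.firstLetter ≠ some i}
  refine ⟨f ⁻¹' S 1, f ⁻¹' S 0, ?_, range fun n => φ (.of 1 ^ n), range fun n => φ (.of 0 ^ n),
    infinite_range_of_injective (hφ.comp (FreeGroup.of_pow_injective 1)),
    infinite_range_of_injective (hφ.comp (FreeGroup.of_pow_injective 0)),
    Pairwise.range_pairwise (f := fun n => φ (.of 1 ^ n)) (translates_disjoint 1),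
    Pairwise.range_pairwise (f := fun n => φ (.of 0 ^ n)) (translates_disjoint 0)⟩
  rw [← preimage_union, FreeGroup.setOf_firstLetter_ne_union (by decide), preimage_univ]
end

section
/- Let A = {n(n−1)/2 : n ∈ ℕ} ⊆ ℤ be the set of triangular numbers. Then for any pairwise distinct natural numbers n, m, k the intersection (2^n + A) ∩ (2^m + A) ∩ (2^k + A) is empty; consequently pack_3(A) ≥ ℵ0, i.e., the set B = {2^m : m ∈ ℕ} is infinite and witnesses that the family {b + A}_{b ∈ B} is 3-disjoint. -/
/-!
If `x - 2^n`, `x - 2^m`, `x - 2^k` with `n < m < k` are triangular, write them as `r(r+1)/2` with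
`r = a, b, c`. Then `b(b+1) - c(c+1) = (b - c)(b + c + 1) = 2^(m+1) (2^(k-m) - 1)`; its two factors
have opposite parity, so one of them is divisible by `2^(m+1)`, forcing `b ≥ 2^m`. On the other
hand `a(a+1) - b(b+1) = 2 (2^m - 2^n)` with `a > b`, so `b < 2^m - 2^n < 2^m`.
-/

def TriangularSet : Set ℤ := {a : ℤ | ∃ n : ℕ, a = ((n * (n - 1)) / 2 : ℕ)}

theorem pow_dvd_or_pow_dvd_of_not_dvd_add {R : Type*} [CommRing R] [IsDomain R] {p u v : R}
    (hp : Prime p) (huv : ¬p ∣ u + v) (j : ℕ) (h : p ^ j ∣ u * v) : p ^ j ∣ u ∨ p ^ j ∣ v := by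
  by_cases hu : p ∣ u
  · exact Or.inl (hp.pow_dvd_of_dvd_mul_right j (fun hv => huv (dvd_add hu hv)) h)
  · exact Or.inr (hp.pow_dvd_of_dvd_mul_left j hu h)

theorem exists_two_mul_eq_mul_succ_of_mem_triangularSet {t : ℤ} (ht : t ∈ TriangularSet) :
    ∃ r : ℕ, 2 * t = r * (r + 1) := by
  obtain ⟨n, rfl⟩ := ht
  have h : 2 * (n * (n - 1) / 2) = n * (n - 1) := Nat.two_mul_div_two_of_even n.even_mul_pred_self
  cases n with
  | zero => exact ⟨0, by simp⟩
  | succ r =>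
    refine ⟨r, ?_⟩
    simp only [Nat.add_sub_cancel] at h ⊢
    rw [mul_comm (r : ℤ)]
    exact_mod_cast h

theorem lt_of_mul_succ_sub_mul_succ_eq {a b : ℕ} {d : ℤ} (hd : 0 < d)
    (h : (a : ℤ) * (a + 1) - b * (b + 1) = 2 * d) : (b : ℤ) < d := by
  have hab : (b : ℤ) < a := by
    by_contra! hle
    nlinarith [Int.natCast_nonneg a]
  nlinarith

theorem two_pow_le_of_dvd_mul_succ_sub_mul_succ {b c : ℕ} {j : ℕ}
    (hpos : (c : ℤ) * (c + 1) < b * (b + 1)) (hdvd : 2 ^ j ∣ (b : ℤ) * (b + 1) - c * (c + 1)) :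
    2 ^ j ≤ 2 * (b : ℤ) := by
  have hcb : (c : ℤ) < b := by
    by_contra! hle
    nlinarith [Int.natCast_nonneg b]
  have hfactor : (b : ℤ) * (b + 1) - c * (c + 1) = (b - c) * (b + c + 1) := by ring
  have hodd : ¬(2 : ℤ) ∣ (b - c) + (b + c + 1) := by
    rw [show (b - c : ℤ) + (b + c + 1) = 2 * b + 1 by ring]
    omega
  rw [hfactor] at hdvd
  rcases pow_dvd_or_pow_dvd_of_not_dvd_add Int.prime_two hodd j hdvd with h | h
  · linarith [Int.le_of_dvd (by linarith) h]
  · linarith [Int.le_of_dvd (by linarith) h]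

theorem sub_two_pow_notMem_triangularSet {x : ℤ} {n m k : ℕ} (hnm : n < m) (hmk : m < k)
    (hn : x - 2 ^ n ∈ TriangularSet) (hm : x - 2 ^ m ∈ TriangularSet) :
    x - 2 ^ k ∉ TriangularSet := by
  intro hk
  obtain ⟨a, ha⟩ := exists_two_mul_eq_mul_succ_of_mem_triangularSet hn
  obtain ⟨b, hb⟩ := exists_two_mul_eq_mul_succ_of_mem_triangularSet hm
  obtain ⟨c, hc⟩ := exists_two_mul_eq_mul_succ_of_mem_triangularSet hk
  have hnm' : (2 : ℤ) ^ n < 2 ^ m := pow_lt_pow_right₀ one_lt_two hnm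
  have hmk' : (2 : ℤ) ^ m < 2 ^ k := pow_lt_pow_right₀ one_lt_two hmk
  have hb_lt : (b : ℤ) < 2 ^ m - 2 ^ n :=
    lt_of_mul_succ_sub_mul_succ_eq (a := a) (by linarith) (by linarith)
  have hdvd : (2 : ℤ) ^ (m + 1) ∣ (b : ℤ) * (b + 1) - c * (c + 1) := by
    have hpow : (2 : ℤ) ^ k = 2 ^ m * 2 ^ (k - m) := by rw [← pow_add, Nat.add_sub_cancel' hmk.le]
    exact ⟨2 ^ (k - m) - 1, by rw [← hb, ← hc, hpow]; ring⟩
  have hb_ge := two_pow_le_of_dvd_mul_succ_sub_mul_succ (by linarith) hdvd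
  rw [pow_succ'] at hb_ge
  linarith [pow_pos (two_pos : (0 : ℤ) < 2) n]

/-- For the set `A` of triangular numbers in `ℤ` and pairwise distinct `n, m, k ∈ ℕ`, the
intersection `(2^n + A) ∩ (2^m + A) ∩ (2^k + A)` is empty; consequently `pack₃(A) ≥ ℵ₀`,
as witnessed by the infinite set `B = {2^m : m ∈ ℕ}` whose translates are `3`-disjoint. -/
theorem triangular_pack3_infinite :
    (∀ n m k : ℕ, n ≠ m → n ≠ k → m ≠ k →
      ((fun a => (2 : ℤ) ^ n + a) '' TriangularSet) ∩
        ((fun a => (2 : ℤ) ^ m + a) '' TriangularSet) ∩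
        ((fun a => (2 : ℤ) ^ k + a) '' TriangularSet) = ∅) ∧
    {x : ℤ | ∃ m : ℕ, x = 2 ^ m}.Infinite := by
  constructor
  · intro n m k hnm hnk hmk
    rw [Set.eq_empty_iff_forall_notMem]
    rintro x ⟨⟨hn, hm⟩, hk⟩
    simp only [Set.image_add_left, Set.mem_preimage, neg_add_eq_sub] at hn hm hk
    rcases hnm.lt_or_gt with _ | _ <;> rcases hnk.lt_or_gt with _ | _ <;>
      rcases hmk.lt_or_gt with _ | _ <;>
      first
      | omega
      | exact sub_two_pow_notMem_triangularSet (by omega) (by omega) hn hm hk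
      | exact sub_two_pow_notMem_triangularSet (by omega) (by omega) hn hk hm
      | exact sub_two_pow_notMem_triangularSet (by omega) (by omega) hm hn hk
      | exact sub_two_pow_notMem_triangularSet (by omega) (by omega) hm hk hn
      | exact sub_two_pow_notMem_triangularSet (by omega) (by omega) hk hn hm
      | exact sub_two_pow_notMem_triangularSet (by omega) (by omega) hk hm hn
  · have hrange : {x : ℤ | ∃ m : ℕ, x = 2 ^ m} = Set.range ((2 : ℤ) ^ ·) := by
      ext; simp [eq_comm]
    rw [hrange]
    exact Set.infinite_range_of_injective (pow_right_injective₀ two_pos (by norm_num))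
end

section
/- Let G be a group, n ≥ 2, and let (I_α)_{α < ω₁} be a family of invariant ideals on G that is increasing with respect to inclusion, and let I = ⋃_{α < ω₁} I_α. If a subset A ⊆ G satisfies I-Pack_n(A) ≥ ℵ0, then there exists a countable ordinal α < ω₁ such that I_α-Pack_n(A) ≥ ℵ0. Consequently, if for every α < ω₁ every set A with I_α-Pack_n(A) ≥ ℵ0 belongs to I, then I is Pack_n-complete. -/
open scoped Pointwise Topology

/-- `I`-`Pack_n(A) ≥ ℵ₀`: for every `m ∈ ℕ` there is `B ⊆ G` with `|B| = m` such that
`⋂_{c ∈ C} cA ∈ I` for every `n`-element subset `C ⊆ B`. -/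
def PackGeAleph0 {G : Type*} [Group G] (I : Set (Set G)) (n : ℕ) (A : Set G) : Prop :=
  ∀ m : ℕ, ∃ B : Finset G, B.card = m ∧
    ∀ C : Finset G, C ⊆ B → C.card = n → (⋂ c ∈ C, (fun a => c * a) '' A) ∈ I

/-- Let `(I_α)_{α < ω₁}` be an increasing family of invariant ideals on `G` with union `I`.
If `I`-`Pack_n(A) ≥ ℵ₀` then already `I_α`-`Pack_n(A) ≥ ℵ₀` for some `α < ω₁`.
Consequently, if every `A` with `I_α`-`Pack_n(A) ≥ ℵ₀` (for some `α`) belongs to `I`, then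
`I` is `Pack_n`-complete. -/
theorem union_omega1_chain_packComplete {G : Type*} [Group G] (n : ℕ) (hn : 2 ≤ n)
    (I : {α : Ordinal // α < (Cardinal.aleph 1).ord} → Set (Set G))
    (hId : ∀ α, IsInvariantIdeal G (I α))
    (hmono : ∀ α β, α.1 ≤ β.1 → I α ⊆ I β) :
    (∀ A : Set G, PackGeAleph0 (⋃ α, I α) n A → ∃ α, PackGeAleph0 (I α) n A) ∧
    ((∀ α, ∀ A : Set G, PackGeAleph0 (I α) n A → A ∈ ⋃ α, I α) →
      ∀ A : Set G, PackGeAleph0 (⋃ α, I α) n A → A ∈ ⋃ α, I α) := by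
  have main : ∀ A : Set G, PackGeAleph0 (⋃ α, I α) n A → ∃ α, PackGeAleph0 (I α) n A := by
    intro A hA
    classical
    choose B hBcard hBmem using hA
    have hmem : ∀ m (C : Finset G), C ⊆ B m → C.card = n →
        ∃ α : {α : Ordinal // α < (Cardinal.aleph 1).ord},
          (⋂ c ∈ C, (fun a => c * a) '' A) ∈ I α := by
      intro m C h1 h2
      simpa [Set.mem_iUnion] using hBmem m C h1 h2
    choose g hg using hmem
    -- total ordinal-valued function
    let g' : ℕ → Finset G → Ordinal := fun m C =>
      if h : C ⊆ B m ∧ C.card = n then (g m C h.1 h.2).1 else 0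
    let o : ℕ → Ordinal := fun m => ((B m).powersetCard n).sup (g' m)
    have hκpos : (0 : Ordinal) < (Cardinal.aleph 1).ord := by
      rw [Cardinal.lt_ord]
      simpa using Cardinal.aleph_pos 1
    have ho : ∀ m, o m < (Cardinal.aleph 1).ord := by
      intro m
      refine Finset.sup_lt_iff hκpos |>.2 ?_
      intro C hC
      rw [Finset.mem_powersetCard] at hC
      simp only [g', dif_pos hC]
      exact (g m C hC.1 hC.2).2
    have hsup : (⨆ m, o m) < (Cardinal.aleph 1).ord := by
      refine Ordinal.iSup_lt_ord_lift ?_ ho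
      rw [Cardinal.isRegular_aleph_one.cof_eq]
      simpa using Cardinal.aleph0_lt_aleph_one
    refine ⟨⟨_, hsup⟩, fun m => ⟨B m, hBcard m, ?_⟩⟩
    intro C h1 h2
    refine hmono (g m C h1 h2) ⟨_, hsup⟩ ?_ (hg m C h1 h2)
    have h1' : g' m C = (g m C h1 h2).1 := dif_pos (And.intro h1 h2)
    exact h1' ▸ le_trans (Finset.le_sup (Finset.mem_powersetCard.2 ⟨h1, h2⟩))
      (le_ciSup (Ordinal.bddAbove_range _) m)
  refine ⟨main, fun h A hA => ?_⟩
  obtain ⟨α, hα⟩ := main A hA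
  exact h α A hα
end
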